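/- arXiv:math/0502401 — 3 statements merged into one kernel-verified Lean document; each statement's English description precedes it below -/
import Mathlib

section
/- Let K be a complete nonarchimedean field with val(ϖ) = 1, e ≥ 1 an integer, and x, t ∈ K^× with 0 < val(x) < 1 and t = x + u·(ϖ/x)^e + f + ϖg where val(u) = 0, val(f) ≥ (e+1)·(1 − val(x)), and val(g) ≥ 0. If val(x) > e/(e+1), then val(t) = e·(1 − val(x)), and in particular val(t) < e/(e+1). -/
/- STATEMENT 9 (Lemma 3.6(2)): K a complete nonarchimedean field with additive
valuation val normalized by val(ϖ) = 1.  If x, t ∈ K^×, 0 < val(x) < 1,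
t = x + u·(ϖ/x)^e + f + ϖ·g with val(u) = 0, val(f) ≥ (e+1)·(1 - val(x)), val(g) ≥ 0,
and val(x) > e/(e+1), then val(t) = e·(1 - val(x)); in particular val(t) < e/(e+1).
The valuation is formalized as a function val : K → ℝ on nonzero elements satisfying
the usual axioms (the value val 0 is irrelevant; hypotheses on possibly-zero elements
f, g are stated disjunctively). -/
theorem stmt9
    (K : Type) [Field K] (val : K → ℝ)
    (hval_mul : ∀ a b : K, a ≠ 0 → b ≠ 0 → val (a * b) = val a + val b)
    (hval_add : ∀ a b : K, a ≠ 0 → b ≠ 0 → a + b ≠ 0 →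
      min (val a) (val b) ≤ val (a + b))
    (hval_neg : ∀ a : K, a ≠ 0 → val (-a) = val a)
    (e : ℕ) (he : 1 ≤ e)
    (ϖ x t u f g : K) (hϖ : val ϖ = 1) (hϖ0 : ϖ ≠ 0)
    (hx0 : x ≠ 0) (ht0 : t ≠ 0) (hu0 : u ≠ 0) (hu : val u = 0)
    (hx_pos : 0 < val x) (hx_lt : val x < 1)
    (ht : t = x + u * (ϖ / x) ^ e + f + ϖ * g)
    (hf : f = 0 ∨ (e + 1 : ℝ) * (1 - val x) ≤ val f)
    (hg : g = 0 ∨ 0 ≤ val g)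
    (hxbig : e / (e + 1) < val x) :
    val t = e * (1 - val x) ∧ val t < e / (e + 1) := by
  have he' : (1:ℝ) ≤ (e:ℝ) := by exact_mod_cast he
  have hep : (0:ℝ) < (e:ℝ) + 1 := by linarith
  -- val 1 = 0
  have hone : val 1 = 0 := by
    have := hval_mul 1 1 one_ne_zero one_ne_zero
    simp at this; linarith
  -- val of inverse
  have hinv : ∀ a : K, a ≠ 0 → val a⁻¹ = - val a := by
    intro a ha
    have := hval_mul a a⁻¹ ha (inv_ne_zero ha)
    rw [mul_inv_cancel₀ ha, hone] at this
    linarith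
  -- val of powers
  have hpow : ∀ (a : K) (n : ℕ), a ≠ 0 → val (a ^ n) = n * val a := by
    intro a n ha
    induction n with
    | zero => simpa using hone
    | succ k ih =>
      have : val (a ^ (k+1)) = val (a ^ k) + val a := by
        rw [pow_succ]; exact hval_mul _ _ (pow_ne_zero _ ha) ha
      rw [this, ih]; push_cast; ring
  -- key: adding strictly larger-valuation (or zero) element doesn't change val
  have key : ∀ a b : K, a ≠ 0 → (b = 0 ∨ (b ≠ 0 ∧ val a < val b)) →
      (a + b ≠ 0 ∧ val (a + b) = val a) := by
    intro a b ha hb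
    rcases hb with rfl | ⟨hb0, hlt⟩
    · simpa using ha
    have hab : a + b ≠ 0 := by
      intro h
      have hba : b = -a := by linear_combination h
      rw [hba, hval_neg a ha] at hlt
      linarith
    constructor
    · exact hab
    have h1 : min (val a) (val b) ≤ val (a + b) := hval_add a b ha hb0 hab
    rw [min_eq_left hlt.le] at h1
    have h2 : min (val (a + b)) (val (-b)) ≤ val ((a + b) + (-b)) := by
      apply hval_add _ _ hab (neg_ne_zero.mpr hb0)
      simpa using ha
    rw [hval_neg b hb0] at h2
    simp only [add_neg_cancel_right] at h2
    rcases le_or_gt (val (a+b)) (val a) with h | h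
    · linarith
    · rw [min_def] at h2
      split_ifs at h2 <;> linarith
  set v := val x with hv
  -- the dominant term
  have hwx : ϖ / x ≠ 0 := div_ne_zero hϖ0 hx0
  have hA0 : u * (ϖ / x) ^ e ≠ 0 := mul_ne_zero hu0 (pow_ne_zero _ hwx)
  have hvwx : val (ϖ / x) = 1 - v := by
    rw [div_eq_mul_inv, hval_mul _ _ hϖ0 (inv_ne_zero hx0), hϖ, hinv x hx0, hv]; ring
  have hA : val (u * (ϖ / x) ^ e) = e * (1 - v) := by
    rw [hval_mul _ _ hu0 (pow_ne_zero _ hwx), hu, hpow _ _ hwx, hvwx]; ring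
  have hClt : (e:ℝ) * (1 - v) < e / (e + 1) := by
    have hxb' : (e:ℝ) < v * (e + 1) := (div_lt_iff₀ hep).mp hxbig
    rw [lt_div_iff₀ hep]
    nlinarith [mul_lt_mul_of_pos_left hxb' (show (0:ℝ) < (e:ℝ) by linarith)]
  have hClt1 : (e:ℝ) * (1 - v) < 1 := by
    have : (e:ℝ)/(e+1) < 1 := by rw [div_lt_one hep]; linarith
    linarith
  have hCltv : (e:ℝ) * (1 - v) < v := lt_trans hClt hxbig
  -- step 1 : A + x
  have s1 := key (u * (ϖ / x) ^ e) x hA0 (Or.inr ⟨hx0, by rw [hA]; exact hCltv⟩)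
  rw [add_comm] at s1
  -- step 2 : + f
  have s2 := key (x + u * (ϖ / x) ^ e) f s1.1 (by
    rcases hf with rfl | hfv
    · exact Or.inl rfl
    · by_cases hf0 : f = 0
      · exact Or.inl hf0
      right
      refine ⟨hf0, ?_⟩
      rw [s1.2, hA]; nlinarith)
  -- step 3 : + ϖ g
  have s3 := key (x + u * (ϖ / x) ^ e + f) (ϖ * g) s2.1 (by
    rcases hg with rfl | hgv
    · exact Or.inl (by ring)
    · by_cases hg0 : g = 0
      · exact Or.inl (by rw [hg0]; ring)
      right
      refine ⟨mul_ne_zero hϖ0 hg0, ?_⟩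
      rw [s2.2, s1.2, hA, hval_mul _ _ hϖ0 hg0, hϖ]
      linarith)
  rw [ht, s3.2, s2.2, s1.2, hA]
  exact ⟨rfl, hClt⟩
end

section
/- Let K be a nonarchimedean valued field with valuation val, e ≥ 1 an integer with val(ϖ) = 1. The map x ↦ val(x) restricted to {x ∈ K : 0 < val(x) < e/(e+1)} together with the formula val(t) = val(x) (from Lemma 3.6(1)), shows: for 0 < a < e/(e+1), a point Q on the annulus 0 < val(x) < 1 satisfies val(t(Q)) = a if and only if val(x(Q)) = a or val(x(Q)) = 1 − a/e. (Equation (3.1): the preimage of the circle of valuation a consists of the circles of valuations a and 1 − a/e.) -/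
set_option maxHeartbeats 1000000


/- STATEMENT 15 (Equation (3.1)): K a nonarchimedean valued field with val(ϖ) = 1,
e ≥ 1, x on the annulus 0 < val(x) < 1, and t = x + u·(ϖ/x)^e + f + ϖ·g with
val(u) = 0, val(f) ≥ (e+1)·(1 - val(x)), val(g) ≥ 0.  For a rational number a with
0 < a < e/(e+1):  val(t) = a  ⟺  val(x) = a or val(x) = 1 - a/e.
The valuation is formalized as a function val : K → ℝ on nonzero elements satisfying
the usual axioms (the value val 0 is irrelevant; hypotheses on possibly-zero elements
f, g are stated disjunctively). -/
theorem stmt15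
    (K : Type) [Field K] (val : K → ℝ)
    (hval_mul : ∀ a b : K, a ≠ 0 → b ≠ 0 → val (a * b) = val a + val b)
    (hval_add : ∀ a b : K, a ≠ 0 → b ≠ 0 → a + b ≠ 0 →
      min (val a) (val b) ≤ val (a + b))
    (hval_neg : ∀ a : K, a ≠ 0 → val (-a) = val a)
    (e : ℕ) (he : 1 ≤ e)
    (ϖ x t u f g : K) (hϖ : val ϖ = 1) (hϖ0 : ϖ ≠ 0)
    (hx0 : x ≠ 0) (ht0 : t ≠ 0) (hu0 : u ≠ 0) (hu : val u = 0)
    (hx_pos : 0 < val x) (hx_lt : val x < 1)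
    (ht : t = x + u * (ϖ / x) ^ e + f + ϖ * g)
    (hf : f = 0 ∨ (e + 1 : ℝ) * (1 - val x) ≤ val f)
    (hg : g = 0 ∨ 0 ≤ val g)
    (a : ℚ) (ha0 : 0 < a) (ha1 : (a : ℝ) < e / (e + 1)) :
    val t = a ↔ (val x = a ∨ val x = 1 - a / e) := by
  have hE1 : (1:ℝ) ≤ (e:ℝ) := by exact_mod_cast he
  have hEpos : (0:ℝ) < (e:ℝ) := by linarith
  have hE1pos : (0:ℝ) < (e:ℝ) + 1 := by linarith
  have ha0' : (0:ℝ) < (a:ℝ) := by exact_mod_cast ha0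
  have haE : (a:ℝ) * ((e:ℝ) + 1) < (e:ℝ) := (lt_div_iff₀ hE1pos).mp ha1
  -- basics
  have h1 : val 1 = 0 := by
    have := hval_mul 1 1 one_ne_zero one_ne_zero
    simp at this; linarith
  have hinv : ∀ b : K, b ≠ 0 → val b⁻¹ = - val b := by
    intro b hb
    have := hval_mul b b⁻¹ hb (inv_ne_zero hb)
    rw [mul_inv_cancel₀ hb, h1] at this
    linarith
  have hpow : ∀ (b : K) (n : ℕ), b ≠ 0 → val (b ^ n) = n * val b := by
    intro b n hb
    induction n with
    | zero => simpa using h1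
    | succ n ih =>
      rw [pow_succ, hval_mul _ _ (pow_ne_zero n hb) hb, ih]
      push_cast; ring
  have hstrict : ∀ p q : K, p ≠ 0 → (q = 0 ∨ (q ≠ 0 ∧ val p < val q)) →
      p + q ≠ 0 ∧ val (p + q) = val p := by
    intro p q hp hq
    rcases hq with rfl | ⟨hq, hlt⟩
    · simpa using hp
    have hpq : p + q ≠ 0 := by
      intro h
      have hpq' : p = -q := eq_neg_of_add_eq_zero_left h
      rw [hpq', hval_neg q hq] at hlt
      linarith
    have h2 : val p ≤ val (p + q) := by
      have := hval_add p q hp hq hpq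
      rw [min_eq_left (le_of_lt hlt)] at this
      exact this
    have h3 : val (p + q) ≤ val p := by
      have heq : (p + q) + (-q) = p := by ring
      have := hval_add (p + q) (-q) hpq (neg_ne_zero.mpr hq) (by rw [heq]; exact hp)
      rw [heq, hval_neg q hq] at this
      rcases le_or_gt (val (p + q)) (val q) with hc | hc
      · rwa [min_eq_left hc] at this
      · rw [min_eq_right (le_of_lt hc)] at this; linarith
    exact ⟨hpq, le_antisymm h3 h2⟩
  have hge : ∀ (m : ℝ) (p q : K), (p = 0 ∨ (p ≠ 0 ∧ m ≤ val p)) →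
      (q = 0 ∨ (q ≠ 0 ∧ m ≤ val q)) → (p + q = 0 ∨ (p + q ≠ 0 ∧ m ≤ val (p + q))) := by
    intro m p q hp hq
    rcases hp with rfl | ⟨hp0, hpm⟩
    · simpa using hq
    rcases hq with rfl | ⟨hq0, hqm⟩
    · right; simpa using ⟨hp0, hpm⟩
    by_cases hpq : p + q = 0
    · exact Or.inl hpq
    · exact Or.inr ⟨hpq, le_trans (le_min hpm hqm) (hval_add p q hp0 hq0 hpq)⟩
  -- the second term
  set y : K := u * (ϖ / x) ^ e with hy_def
  have hyx0 : ϖ / x ≠ 0 := div_ne_zero hϖ0 hx0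
  have hy0 : y ≠ 0 := mul_ne_zero hu0 (pow_ne_zero e hyx0)
  have hyval : val y = (e : ℝ) * (1 - val x) := by
    rw [hy_def, hval_mul u _ hu0 (pow_ne_zero e hyx0), hu, hpow _ e hyx0,
      div_eq_mul_inv, hval_mul ϖ x⁻¹ hϖ0 (inv_ne_zero hx0), hinv x hx0, hϖ]
    ring
  have hϖg : g ≠ 0 → val (ϖ * g) = 1 + val g := by
    intro hg0
    rw [hval_mul ϖ g hϖ0 hg0, hϖ]
  rcases lt_trichotomy (val x) ((e:ℝ) / ((e:ℝ) + 1)) with hc | hc | hc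
  · -- val x < e/(e+1): val t = val x
    have hv : val x * ((e:ℝ) + 1) < (e:ℝ) := (lt_div_iff₀ hE1pos).mp hc
    have s1 := hstrict x y hx0 (Or.inr ⟨hy0, by rw [hyval]; nlinarith⟩)
    have s2 : x + y + f ≠ 0 ∧ val (x + y + f) = val x := by
      have := hstrict (x + y) f s1.1 ?_
      · rwa [s1.2] at this
      by_cases hf0 : f = 0
      · exact Or.inl hf0
      · rcases hf with h | h
        · exact absurd h hf0
        · exact Or.inr ⟨hf0, by rw [s1.2]; nlinarith⟩
    have s3 : t ≠ 0 ∧ val t = val x := by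
      rw [ht]
      have := hstrict (x + y + f) (ϖ * g) s2.1 ?_
      · rwa [s2.2] at this
      by_cases hg0 : g = 0
      · exact Or.inl (by rw [hg0, mul_zero])
      · rcases hg with h | h
        · exact absurd h hg0
        · exact Or.inr ⟨mul_ne_zero hϖ0 hg0, by rw [hϖg hg0, s2.2]; linarith⟩
    rw [s3.2]
    constructor
    · exact fun h => Or.inl h
    · rintro (h | h)
      · exact h
      · exfalso
        have hd : (a:ℝ) / (e:ℝ) * (e:ℝ) = (a:ℝ) := div_mul_cancel₀ _ (ne_of_gt hEpos)
        nlinarith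
  · -- val x = e/(e+1): val t ≥ e/(e+1) > a, both sides false
    have hv : val x * ((e:ℝ) + 1) = (e:ℝ) := by
      rw [hc]; field_simp
    set m : ℝ := (e:ℝ) / ((e:ℝ) + 1) with hm_def
    have hm1 : m < 1 := by rw [hm_def, div_lt_one hE1pos]; linarith
    have g1 := hge m x y (Or.inr ⟨hx0, le_of_eq hc.symm⟩)
      (Or.inr ⟨hy0, by
        rw [hyval, hc]
        have : (e:ℝ) * (1 - m) = m := by rw [hm_def]; field_simp; ring
        rw [this]⟩)
    have g2 := hge m (x + y) f g1 ?_
    · have g3 := hge m (x + y + f) (ϖ * g) g2 ?_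
      · rcases g3 with h | ⟨_, hle⟩
        · exact absurd (ht.trans h) ht0
        · rw [← ht] at hle
          have hd : (a:ℝ) / (e:ℝ) * (e:ℝ) = (a:ℝ) := div_mul_cancel₀ _ (ne_of_gt hEpos)
          have hgt : m < 1 - (a:ℝ) / (e:ℝ) := by
            rw [hm_def, div_lt_iff₀ hE1pos]
            nlinarith
          constructor
          · intro h; exfalso; rw [h] at hle; linarith
          · rintro (h | h)
            · exfalso; rw [hc] at h; linarith
            · exfalso; rw [hc] at h; linarith
      · by_cases hg0 : g = 0
        · exact Or.inl (by rw [hg0, mul_zero])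
        · rcases hg with h | h
          · exact absurd h hg0
          · exact Or.inr ⟨mul_ne_zero hϖ0 hg0, by rw [hϖg hg0]; linarith⟩
    · by_cases hf0 : f = 0
      · exact Or.inl hf0
      · rcases hf with h | h
        · exact absurd h hf0
        · refine Or.inr ⟨hf0, le_trans ?_ h⟩
          rw [hc, hm_def]
          rw [div_le_iff₀ hE1pos]
          nlinarith [mul_pos hEpos hE1pos]
  · -- val x > e/(e+1): val t = e*(1 - val x)
    have hv : (e:ℝ) < val x * ((e:ℝ) + 1) := (div_lt_iff₀ hE1pos).mp hc
    have hsmall : (e:ℝ) * (1 - val x) < val x := by nlinarith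
    have hlt1 : (e:ℝ) * (1 - val x) < 1 := by nlinarith
    have s1 := hstrict y x hy0 (Or.inr ⟨hx0, by rw [hyval]; exact hsmall⟩)
    have hyx : y + x = x + y := by ring
    have s1' : x + y ≠ 0 ∧ val (x + y) = (e:ℝ) * (1 - val x) := by
      rw [← hyx]; exact ⟨s1.1, by rw [s1.2, hyval]⟩
    have s2 : x + y + f ≠ 0 ∧ val (x + y + f) = (e:ℝ) * (1 - val x) := by
      have := hstrict (x + y) f s1'.1 ?_
      · rwa [s1'.2] at this
      by_cases hf0 : f = 0
      · exact Or.inl hf0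
      · rcases hf with h | h
        · exact absurd h hf0
        · exact Or.inr ⟨hf0, by rw [s1'.2]; nlinarith⟩
    have s3 : t ≠ 0 ∧ val t = (e:ℝ) * (1 - val x) := by
      rw [ht]
      have := hstrict (x + y + f) (ϖ * g) s2.1 ?_
      · rwa [s2.2] at this
      by_cases hg0 : g = 0
      · exact Or.inl (by rw [hg0, mul_zero])
      · rcases hg with h | h
        · exact absurd h hg0
        · exact Or.inr ⟨mul_ne_zero hϖ0 hg0, by rw [hϖg hg0, s2.2]; linarith⟩
    rw [s3.2]
    have hd : (a:ℝ) / (e:ℝ) * (e:ℝ) = (a:ℝ) := div_mul_cancel₀ _ (ne_of_gt hEpos)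
    constructor
    · intro h
      right
      have hkey : val x = ((e:ℝ) - a) / (e:ℝ) := by
        rw [eq_div_iff (ne_of_gt hEpos)]; nlinarith
      rw [hkey, sub_div, div_self (ne_of_gt hEpos)]
    · rintro (h | h)
      · exfalso; nlinarith
      · rw [h]; linear_combination hd
end

section
/- Let k be a field and e ≥ 1 an integer, and let c ∈ k be nonzero. There is no rational function s(T) ∈ k(T) such that T = s(T) + c·s(T)^{−e} as elements of k(T). (Degree considerations: the identity x + c·x^{−e} = T has no rational-function solution x = s(T).) -/
/- STATEMENT 17: Let k be a field, e ≥ 1 an integer and c ∈ k nonzero.  There is no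
rational function s(T) ∈ k(T) with T = s(T) + c·s(T)^{-e} in k(T). -/
theorem stmt17
    (k : Type) [Field k] (e : ℕ) (he : 1 ≤ e) (c : k) (hc : c ≠ 0) :
    ¬ ∃ s : RatFunc k, RatFunc.X = s + RatFunc.C c * s⁻¹ ^ e := by
  rintro ⟨s, h⟩
  have hs : s ≠ 0 := by
    rintro rfl
    simp [zero_pow (Nat.one_le_iff_ne_zero.mp he)] at h
    exact RatFunc.X_ne_zero h
  -- multiply by s^e
  have hse : s ^ e ≠ 0 := pow_ne_zero _ hs
  have h2 : RatFunc.X * s ^ e = s ^ (e + 1) + RatFunc.C c := by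
    rw [h, inv_pow, add_mul, mul_assoc, inv_mul_cancel₀ hse]; ring
  set A := algebraMap (Polynomial k) (RatFunc k) with hA
  have hAinj : Function.Injective A := RatFunc.algebraMap_injective k
  set p := s.num with hp
  set q := s.denom with hqdef
  have hq0 : A q ≠ 0 := by
    simpa using (map_ne_zero_iff A hAinj).mpr (RatFunc.denom_ne_zero s)
  have hsq : s = A p / A q := (RatFunc.num_div_denom s).symm
  have hX : (RatFunc.X : RatFunc k) = A Polynomial.X := (RatFunc.algebraMap_X).symm
  have hC : (RatFunc.C c : RatFunc k) = A (Polynomial.C c) := (RatFunc.algebraMap_C c).symm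
  have key : Polynomial.X * p ^ e * q = p ^ (e + 1) + Polynomial.C c * q ^ (e + 1) := by
    apply hAinj
    have := h2
    rw [hsq, hX, hC] at this
    push_cast [map_mul, map_pow, map_add]
    rw [div_pow, div_pow, div_add' _ _ _ (pow_ne_zero _ hq0), mul_div_assoc',
      div_eq_div_iff (pow_ne_zero _ hq0) (pow_ne_zero _ hq0)] at this
    apply mul_right_cancel₀ (pow_ne_zero e hq0)
    linear_combination this
  -- q divides p^(e+1)
  have hcop : IsCoprime p q := RatFunc.isCoprime_num_denom s
  have hqdvd : q ∣ p ^ (e + 1) := by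
    have h1 : q ∣ Polynomial.X * p ^ e * q := ⟨Polynomial.X * p ^ e, by ring⟩
    have h2' : q ∣ Polynomial.C c * q ^ (e + 1) := ⟨Polynomial.C c * q ^ e, by ring⟩
    have : q ∣ p ^ (e + 1) + Polynomial.C c * q ^ (e + 1) := key ▸ h1
    exact (dvd_add_right h2').mp (by rwa [add_comm] at this)
  have hqunit : IsUnit q := (hcop.symm.pow_right).isUnit_of_dvd hqdvd
  have hq1 : q = 1 := (RatFunc.monic_denom s).eq_one_of_isUnit hqunit
  rw [hq1] at key
  simp only [mul_one, one_pow] at key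
  -- p divides C c
  have hp0 : p ≠ 0 := RatFunc.num_ne_zero hs
  have hpdvd : p ∣ Polynomial.C c := by
    have h1 : p ∣ Polynomial.X * p ^ e := Dvd.dvd.mul_left (dvd_pow_self p (Nat.one_le_iff_ne_zero.mp he)) _
    have h2' : p ∣ p ^ (e + 1) := dvd_pow_self p (Nat.succ_ne_zero e)
    have : p ∣ p ^ (e + 1) + Polynomial.C c := key ▸ h1
    exact (dvd_add_right h2').mp this
  have hpdeg : p.natDegree = 0 := by
    have := Polynomial.natDegree_le_of_dvd hpdvd (by simpa using hc)
    simpa using this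
  obtain ⟨a, hpa⟩ := Polynomial.natDegree_eq_zero.mp hpdeg
  rw [← hpa] at key hp0
  have ha : a ≠ 0 := by simpa using hp0
  -- compare coefficient 1
  have key2 : (Polynomial.X * Polynomial.C a ^ e).coeff 1
      = (Polynomial.C a ^ (e + 1) + Polynomial.C c).coeff 1 := by rw [key]
  rw [← Polynomial.C_pow, ← Polynomial.C_pow, Polynomial.coeff_add, Polynomial.coeff_C,
    Polynomial.coeff_C, Polynomial.coeff_X_mul, Polynomial.coeff_C] at key2
  simp at key2
  exact ha key2.1
end
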